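/- Let G be a real symmetric positive semidefinite P × P matrix (P = P_g + P_e) partitioned as G = [[G_gg, G_ge], [G_eg, G_ee]] with G_eg = G_geᵀ, and let G_exp = [[0, 0], [0, G_ee]] be the expert-only approximation. Then Δ = G − G_exp satisfies ‖Δ‖_F² = ‖G_gg‖_F² + 2‖G_ge‖_F², and with τ = min{Tr(G), Tr(G_exp)} > 0 and ε = √P ‖Δ‖_F / τ, if ε ≤ 1 − 1/P then |log r_e(G) − log r_e(G_exp)| ≤ ε log(P−1) + h(ε), where h(ε) = −ε log ε − (1−ε) log(1−ε). -/

import Mathlib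

open Matrix
open Real Finset
open scoped RealInnerProductSpace

open Classical in
/-- The eigenvalues of a symmetric real matrix (junk value `0` otherwise). -/
noncomputable def eigs {n : Type*} [Fintype n] [DecidableEq n] (A : Matrix n n ℝ) : n → ℝ :=
  if h : A.IsHermitian then h.eigenvalues else 0

open Classical in
/-- The largest eigenvalue of a symmetric real matrix. -/
noncomputable def maxEig {n : Type*} [Fintype n] [DecidableEq n] (A : Matrix n n ℝ) : ℝ :=
  if h : A.IsHermitian then ⨆ i, h.eigenvalues i else 0

open Classical in
/-- The smallest eigenvalue of a symmetric real matrix. -/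
noncomputable def minEig {n : Type*} [Fintype n] [DecidableEq n] (A : Matrix n n ℝ) : ℝ :=
  if h : A.IsHermitian then ⨅ i, h.eigenvalues i else 0

/-- The spectral condition number `κ(A) = λ_max(A) / λ_min(A)`. -/
noncomputable def condNumberR {n : Type*} [Fintype n] [DecidableEq n]
    (A : Matrix n n ℝ) : ℝ :=
  maxEig A / minEig A

open Classical in
/-- Spectral (Shannon) entropy of the normalized eigenvalue distribution
`p_i = λ_i / ∑_j λ_j` of a symmetric real matrix: `H(p) = -∑ p_i log p_i`. -/
noncomputable def specEntropy {n : Type*} [Fintype n] [DecidableEq n]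
    (A : Matrix n n ℝ) : ℝ :=
  if h : A.IsHermitian then
    -(∑ i, (h.eigenvalues i / ∑ j, h.eigenvalues j) *
        Real.log (h.eigenvalues i / ∑ j, h.eigenvalues j))
  else 0

/-- Spectral-entropy effective rank `r_e(A) = exp(H(p))` (for symmetric positive
semidefinite matrices the singular values equal the eigenvalues). -/
noncomputable def effRank {n : Type*} [Fintype n] [DecidableEq n]
    (A : Matrix n n ℝ) : ℝ :=
  Real.exp (specEntropy A)

/-- Squared Frobenius norm: `‖A‖_F² = Tr(Aᵀ A)`. -/
noncomputable def frobSq {m n : Type*} [Fintype m] [Fintype n] (A : Matrix m n ℝ) : ℝ :=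
  Matrix.trace (Aᵀ * A)

/-- Frobenius norm. -/
noncomputable def frobNorm {m n : Type*} [Fintype m] [Fintype n] (A : Matrix m n ℝ) : ℝ :=
  Real.sqrt (frobSq A)

/-- The binary entropy function `h(ε) = −ε log ε − (1−ε) log(1−ε)`. -/
noncomputable def binEnt (x : ℝ) : ℝ :=
  -(x * Real.log x) - (1 - x) * Real.log (1 - x)


open Real Finset

lemma negMulLog_add_le' {x y : ℝ} (hx : 0 ≤ x) (hy : 0 ≤ y) :
    Real.negMulLog (x + y) ≤ Real.negMulLog x + Real.negMulLog y := by
  rcases eq_or_lt_of_le hx with h | h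
  · simp [← h]
  rcases eq_or_lt_of_le hy with h' | h'
  · simp [← h']
  have h1 : Real.log x ≤ Real.log (x + y) := Real.log_le_log h (by linarith)
  have h2 : Real.log y ≤ Real.log (x + y) := Real.log_le_log h' (by linarith)
  simp only [Real.negMulLog, neg_mul]
  nlinarith

lemma entropy_nonneg {ι : Type*} [Fintype ι] (w : ι → ℝ)
    (hw : ∀ i, 0 ≤ w i) (hsum : ∑ i, w i = 1) :
    0 ≤ ∑ i, Real.negMulLog (w i) := by
  apply Finset.sum_nonneg
  intro i _
  apply Real.negMulLog_nonneg (hw i)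
  calc w i ≤ ∑ j, w j := Finset.single_le_sum (fun j _ => hw j) (mem_univ i)
    _ = 1 := hsum

lemma entropy_le_log_card {ι : Type*} [Fintype ι] [DecidableEq ι] (w : ι → ℝ)
    (hw : ∀ i, 0 ≤ w i) (hsum : ∑ i, w i = 1) :
    ∑ i, Real.negMulLog (w i) ≤ Real.log ((Finset.univ.filter (fun i => w i ≠ 0)).card) := by
  classical
  set s := Finset.univ.filter (fun i => w i ≠ 0) with hs
  have hmem : ∀ i ∈ s, 0 < w i := by
    intro i hi
    rw [hs, Finset.mem_filter] at hi
    exact lt_of_le_of_ne (hw i) (Ne.symm hi.2)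
  have hzero : ∀ i ∈ Finset.univ, i ∉ s → Real.negMulLog (w i) = 0 := by
    intro i _ hi
    rw [hs, Finset.mem_filter] at hi
    push_neg at hi
    rw [hi (mem_univ i), Real.negMulLog_zero]
  have hzero' : ∀ i ∈ Finset.univ, i ∉ s → w i = 0 := by
    intro i _ hi
    rw [hs, Finset.mem_filter] at hi
    push_neg at hi
    exact hi (mem_univ i)
  have hsub : ∑ i, Real.negMulLog (w i) = ∑ i ∈ s, Real.negMulLog (w i) :=
    (Finset.sum_subset (Finset.subset_univ s) hzero).symm
  have hws : ∑ i ∈ s, w i = 1 := by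
    rw [← hsum]
    exact Finset.sum_subset (Finset.subset_univ s) hzero'
  have hk : 0 < s.card := by
    rcases Finset.eq_empty_or_nonempty s with h | h
    · rw [h] at hws; simp at hws
    · exact Finset.card_pos.mpr h
  set k : ℝ := (s.card : ℝ) with hkdef
  have hk0 : 0 < k := by rw [hkdef]; exact_mod_cast hk
  have key : ∀ i ∈ s, Real.negMulLog (w i) ≤ (1/k - w i) + w i * Real.log k := by
    intro i hi
    have hwi := hmem i hi
    have hpos : 0 < 1 / (k * w i) := by positivity
    have hlog : Real.log (1 / (k * w i)) ≤ 1 / (k * w i) - 1 :=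
      Real.log_le_sub_one_of_pos hpos
    have hexp : Real.negMulLog (w i) = w i * Real.log (1 / (k * w i)) + w i * Real.log k := by
      rw [Real.negMulLog, Real.log_div (by norm_num) (by positivity), Real.log_mul (ne_of_gt hk0) (ne_of_gt hwi), Real.log_one]
      ring
    rw [hexp]
    have : w i * Real.log (1 / (k * w i)) ≤ w i * (1 / (k * w i) - 1) :=
      mul_le_mul_of_nonneg_left hlog (le_of_lt hwi)
    have heq : w i * (1 / (k * w i) - 1) = 1/k - w i := by
      field_simp
    linarith [heq ▸ this]
  calc ∑ i, Real.negMulLog (w i) = ∑ i ∈ s, Real.negMulLog (w i) := hsub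
    _ ≤ ∑ i ∈ s, ((1/k - w i) + w i * Real.log k) := Finset.sum_le_sum key
    _ = (s.card : ℝ) * (1/k) - (∑ i ∈ s, w i) + (∑ i ∈ s, w i) * Real.log k := by
        rw [Finset.sum_add_distrib, Finset.sum_sub_distrib, ← Finset.sum_mul, Finset.sum_const, nsmul_eq_mul]
    _ = Real.log k := by
        rw [hws, ← hkdef]
        field_simp
        ring

lemma fannes_aux {ι : Type*} [Fintype ι] [DecidableEq ι] (a b : ι → ℝ) {δ : ℝ}
    (ha : ∀ i, 0 ≤ a i) (hb : ∀ i, 0 ≤ b i)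
    (hsa : ∑ i, a i = 1) (hsb : ∑ i, b i = 1)
    (hδ : δ = (∑ i, |a i - b i|) / 2) (hδ1 : δ < 1) :
    ∑ i, Real.negMulLog (a i) - ∑ i, Real.negMulLog (b i) ≤
      δ * Real.log ((Fintype.card ι : ℝ) - 1) + (Real.negMulLog δ + Real.negMulLog (1 - δ)) := by
  classical
  have hδ0 : 0 ≤ δ := by
    rw [hδ]
    positivity
  rcases eq_or_lt_of_le hδ0 with hδz | hδpos
  · -- δ = 0 : a = b
    have hab : ∀ i, a i = b i := by
      intro i
      have h0 : ∑ i, |a i - b i| = 0 := by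
        rw [hδ] at hδz; linarith
      have := (Finset.sum_eq_zero_iff_of_nonneg (fun i (_ : i ∈ Finset.univ) => abs_nonneg (a i - b i))).mp h0 i (Finset.mem_univ i)
      have := abs_eq_zero.mp this
      linarith
    have : ∑ i, Real.negMulLog (a i) = ∑ i, Real.negMulLog (b i) := by
      apply Finset.sum_congr rfl; intro i _; rw [hab i]
    rw [this, ← hδz]
    simp [Real.negMulLog_zero, Real.negMulLog_one]
  -- δ > 0
  set m : ι → ℝ := fun i => min (a i) (b i) with hm
  have hm0 : ∀ i, 0 ≤ m i := fun i => le_min (ha i) (hb i)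
  have hmeq : ∀ i, m i = (a i + b i - |a i - b i|) / 2 := by
    intro i
    rcases le_total (a i) (b i) with h | h
    · rw [hm]; simp only [min_eq_left h]
      rw [abs_of_nonpos (by linarith)]; ring
    · rw [hm]; simp only [min_eq_right h]
      rw [abs_of_nonneg (by linarith)]; ring
  have hsm : ∑ i, m i = 1 - δ := by
    have h1 : ∑ i, m i = ∑ i, (a i + b i - |a i - b i|) / 2 :=
      Finset.sum_congr rfl (fun i _ => hmeq i)
    rw [h1, ← Finset.sum_div, Finset.sum_sub_distrib, Finset.sum_add_distrib, hsa, hsb, hδ]; ring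
  set u : ι → ℝ := fun i => (a i - m i) / δ with hu
  set v : ι → ℝ := fun i => (b i - m i) / δ with hv
  have hu0 : ∀ i, 0 ≤ u i := fun i => div_nonneg (by have := min_le_left (a i) (b i); simpa [hm] using sub_nonneg.mpr this) (le_of_lt hδpos)
  have hv0 : ∀ i, 0 ≤ v i := fun i => div_nonneg (by have := min_le_right (a i) (b i); simpa [hm] using sub_nonneg.mpr this) (le_of_lt hδpos)
  have hsu : ∑ i, u i = 1 := by
    rw [hu]
    rw [← Finset.sum_div, Finset.sum_sub_distrib, hsa, hsm]
    field_simp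
    ring
  have hsv : ∑ i, v i = 1 := by
    rw [hv]
    rw [← Finset.sum_div, Finset.sum_sub_distrib, hsb, hsm]
    field_simp
    ring
  have ha' : ∀ i, a i = m i + δ * u i := by
    intro i; rw [hu]; field_simp; ring
  have hb' : ∀ i, b i = m i + δ * v i := by
    intro i; rw [hv]; field_simp; ring
  have huv : ∀ i, u i = 0 ∨ v i = 0 := by
    intro i
    rcases min_cases (a i) (b i) with ⟨h, _⟩ | ⟨h, _⟩
    · left; show (a i - m i) / δ = 0
      rw [hm]; simp only; rw [h, sub_self, zero_div]
    · right; show (b i - m i) / δ = 0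
      rw [hm]; simp only; rw [h, sub_self, zero_div]
  have hu1 : ∀ i, u i ≤ 1 := by
    intro i
    calc u i ≤ ∑ j, u j := Finset.single_le_sum (fun j _ => hu0 j) (Finset.mem_univ i)
      _ = 1 := hsu
  have hv1 : ∀ i, v i ≤ 1 := by
    intro i
    calc v i ≤ ∑ j, v j := Finset.single_le_sum (fun j _ => hv0 j) (Finset.mem_univ i)
      _ = 1 := hsv
  -- Upper bound on H(a)
  have hupper : ∑ i, Real.negMulLog (a i) ≤
      ∑ i, Real.negMulLog (m i) + Real.negMulLog δ + δ * ∑ i, Real.negMulLog (u i) := by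
    have step1 : ∀ i, Real.negMulLog (a i) ≤ Real.negMulLog (m i) + Real.negMulLog (δ * u i) := by
      intro i
      rw [ha' i]
      exact negMulLog_add_le' (hm0 i) (mul_nonneg hδ0 (hu0 i))
    calc ∑ i, Real.negMulLog (a i)
        ≤ ∑ i, (Real.negMulLog (m i) + Real.negMulLog (δ * u i)) :=
          Finset.sum_le_sum (fun i _ => step1 i)
      _ = ∑ i, Real.negMulLog (m i) + ∑ i, (u i * Real.negMulLog δ + δ * Real.negMulLog (u i)) := by
          rw [Finset.sum_add_distrib]
          congr 1
          exact Finset.sum_congr rfl (fun i _ => by rw [Real.negMulLog_mul])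
      _ = ∑ i, Real.negMulLog (m i) + Real.negMulLog δ + δ * ∑ i, Real.negMulLog (u i) := by
          rw [Finset.sum_add_distrib, ← Finset.sum_mul, hsu, ← Finset.mul_sum]
          ring
  -- Lower bound on H(b)
  have hlower : ∑ i, Real.negMulLog (m i) - Real.negMulLog (1 - δ) ≤ ∑ i, Real.negMulLog (b i) := by
    have h1δ : (0:ℝ) < 1 - δ := by linarith
    have step : ∀ i, Real.negMulLog (m i) + m i * Real.log (1 - δ) + δ * Real.negMulLog (v i)
        ≤ Real.negMulLog (b i) := by
      intro i
      have hconc := Real.concaveOn_negMulLog.2 (Set.mem_Ici.mpr (div_nonneg (hm0 i) (le_of_lt h1δ)))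
        (Set.mem_Ici.mpr (hv0 i)) (by linarith : (0:ℝ) ≤ 1 - δ) hδ0 (by ring)
      have hcomb : (1 - δ) • (m i / (1 - δ)) + δ • (v i) = b i := by
        rw [smul_eq_mul, smul_eq_mul, hb' i]
        field_simp
      rw [hcomb] at hconc
      have hterm : (1 - δ) • Real.negMulLog (m i / (1 - δ)) =
          Real.negMulLog (m i) + m i * Real.log (1 - δ) := by
        rcases eq_or_lt_of_le (hm0 i) with h | h
        · rw [← h]; simp [Real.negMulLog_zero]
        · rw [smul_eq_mul, Real.negMulLog, Real.negMulLog,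
            Real.log_div (ne_of_gt h) (ne_of_gt h1δ)]
          field_simp
          ring
      rw [hterm, smul_eq_mul] at hconc
      exact hconc
    calc ∑ i, Real.negMulLog (m i) - Real.negMulLog (1 - δ)
        = ∑ i, Real.negMulLog (m i) + (∑ i, m i) * Real.log (1 - δ) + δ * 0 := by
          rw [hsm, Real.negMulLog]; ring
      _ ≤ ∑ i, Real.negMulLog (m i) + (∑ i, m i) * Real.log (1 - δ)
            + δ * ∑ i, Real.negMulLog (v i) := by
          have : 0 ≤ ∑ i, Real.negMulLog (v i) :=
            Finset.sum_nonneg (fun i _ => Real.negMulLog_nonneg (hv0 i) (hv1 i))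
          nlinarith
      _ = ∑ i, (Real.negMulLog (m i) + m i * Real.log (1 - δ) + δ * Real.negMulLog (v i)) := by
          rw [Finset.sum_add_distrib, Finset.sum_add_distrib, ← Finset.sum_mul, ← Finset.mul_sum]
      _ ≤ ∑ i, Real.negMulLog (b i) := Finset.sum_le_sum (fun i _ => step i)
  -- support bound on u
  have hHu : ∑ i, Real.negMulLog (u i) ≤ Real.log ((Fintype.card ι : ℝ) - 1) := by
    have h1 := entropy_le_log_card u hu0 hsu
    set su := Finset.univ.filter (fun i => u i ≠ 0) with hsu'
    set sv := Finset.univ.filter (fun i => v i ≠ 0) with hsv'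
    have hdisj : Disjoint su sv := by
      rw [Finset.disjoint_left]
      intro i hiu hiv
      rw [hsu', Finset.mem_filter] at hiu
      rw [hsv', Finset.mem_filter] at hiv
      rcases huv i with h | h
      · exact hiu.2 h
      · exact hiv.2 h
    have hvne : sv.Nonempty := by
      by_contra h
      rw [Finset.not_nonempty_iff_eq_empty] at h
      have : ∑ i, v i = 0 := by
        apply Finset.sum_eq_zero
        intro i _
        by_contra hne
        have : i ∈ sv := by rw [hsv']; simp [hne]
        rw [h] at this; exact absurd this (Finset.notMem_empty i)
      exact zero_ne_one (this.symm.trans hsv)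
    have hcard : su.card + 1 ≤ Fintype.card ι := by
      calc su.card + 1 ≤ su.card + sv.card := by
            have := Finset.card_pos.mpr hvne; omega
        _ = (su ∪ sv).card := (Finset.card_union_of_disjoint hdisj).symm
        _ ≤ Fintype.card ι := by
            rw [← Finset.card_univ]
            exact Finset.card_le_card (Finset.subset_univ _)
    have hsupos : 0 < su.card := by
      rcases Finset.eq_empty_or_nonempty su with h | h
      · exfalso
        have : ∑ i, u i = 0 := by
          apply Finset.sum_eq_zero
          intro i _
          by_contra hne
          have : i ∈ su := by rw [hsu']; simp [hne]
          rw [h] at this; exact absurd this (Finset.notMem_empty i)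
        rw [this] at hsu; norm_num at hsu
      · exact Finset.card_pos.mpr h
    calc ∑ i, Real.negMulLog (u i) ≤ Real.log (su.card) := h1
      _ ≤ Real.log ((Fintype.card ι : ℝ) - 1) := by
          apply Real.log_le_log (by exact_mod_cast hsupos)
          have : (su.card : ℝ) + 1 ≤ (Fintype.card ι : ℝ) := by exact_mod_cast hcard
          linarith
  -- combine
  calc ∑ i, Real.negMulLog (a i) - ∑ i, Real.negMulLog (b i)
      ≤ (∑ i, Real.negMulLog (m i) + Real.negMulLog δ + δ * ∑ i, Real.negMulLog (u i))
        - (∑ i, Real.negMulLog (m i) - Real.negMulLog (1 - δ)) := by linarith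
    _ = δ * ∑ i, Real.negMulLog (u i) + (Real.negMulLog δ + Real.negMulLog (1 - δ)) := by ring
    _ ≤ δ * Real.log ((Fintype.card ι : ℝ) - 1) + (Real.negMulLog δ + Real.negMulLog (1 - δ)) := by
        have := mul_le_mul_of_nonneg_left hHu hδ0
        linarith

lemma fannes_mono {P : ℕ} {δ ε : ℝ} (hP : 1 ≤ P) (h0 : 0 ≤ δ) (hδε : δ ≤ ε)
    (hε : ε ≤ 1 - 1/(P:ℝ)) :
    δ * Real.log ((P:ℝ) - 1) + (Real.negMulLog δ + Real.negMulLog (1 - δ)) ≤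
    ε * Real.log ((P:ℝ) - 1) + (Real.negMulLog ε + Real.negMulLog (1 - ε)) := by
  have hPpos : (0:ℝ) < (P:ℝ) := by
    have : (1:ℝ) ≤ (P:ℝ) := by exact_mod_cast hP
    linarith
  set L : ℝ := Real.log ((P:ℝ) - 1) with hL
  set f : ℝ → ℝ := fun x => x * L + (Real.negMulLog x + Real.negMulLog (1 - x)) with hf
  have hcont : ContinuousOn f (Set.Icc 0 (1 - 1/(P:ℝ))) :=
    ((continuous_id.mul continuous_const).add (Real.continuous_negMulLog.add
      (Real.continuous_negMulLog.comp (continuous_const.sub continuous_id)))).continuousOn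
  have hder : ∀ x ∈ interior (Set.Icc (0:ℝ) (1 - 1/(P:ℝ))),
      HasDerivAt f (L - Real.log x + Real.log (1 - x)) x := by
    intro x hx
    rw [interior_Icc] at hx
    obtain ⟨hx0, hxT⟩ := hx
    have hx1 : x < 1 := by
      have h1 : (0:ℝ) < 1/(P:ℝ) := by positivity
      linarith
    have h1x : (0:ℝ) < 1 - x := by linarith
    have h1 : HasDerivAt (fun y : ℝ => y * L) L x := by
      simpa using (hasDerivAt_id x).mul_const L
    have h2 : HasDerivAt Real.negMulLog (-Real.log x - 1) x :=
      Real.hasDerivAt_negMulLog (ne_of_gt hx0)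
    have hinner : HasDerivAt (fun y : ℝ => 1 - y) (-1) x := by
      simpa using (hasDerivAt_id x).const_sub (1:ℝ)
    have h3 : HasDerivAt (fun y : ℝ => Real.negMulLog (1 - y))
        ((-Real.log (1 - x) - 1) * (-1)) x :=
      (Real.hasDerivAt_negMulLog (ne_of_gt h1x)).comp x hinner
    have := h1.add (h2.add h3)
    exact this.congr_deriv (by ring)
  have hmono : MonotoneOn f (Set.Icc 0 (1 - 1/(P:ℝ))) := by
    apply monotoneOn_of_deriv_nonneg (convex_Icc _ _) hcont
    · intro x hx
      exact (hder x hx).differentiableAt.differentiableWithinAt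
    · intro x hx
      rw [(hder x hx).deriv]
      rw [interior_Icc] at hx
      obtain ⟨hx0, hxT⟩ := hx
      have hP1 : (1:ℝ) < (P:ℝ) := by
        by_contra h
        push_neg at h
        have h2 : 1 ≤ 1/(P:ℝ) := by
          rw [le_div_iff₀ hPpos]; linarith
        linarith
      have hx1 : x < 1 := by
        have h1 : (0:ℝ) < 1/(P:ℝ) := by positivity
        linarith
      have h1x : (0:ℝ) < 1 - x := by linarith
      have hkey : x ≤ ((P:ℝ) - 1) * (1 - x) := by
        have h1 : x * (P:ℝ) ≤ (P:ℝ) - 1 := by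
          calc x * (P:ℝ) ≤ (1 - 1/(P:ℝ)) * (P:ℝ) :=
                mul_le_mul_of_nonneg_right (le_of_lt hxT) (le_of_lt hPpos)
            _ = (P:ℝ) - 1 := by field_simp
        nlinarith
      have hlog : Real.log x ≤ Real.log (((P:ℝ) - 1) * (1 - x)) :=
        Real.log_le_log hx0 hkey
      rw [Real.log_mul (by linarith) (ne_of_gt h1x)] at hlog
      rw [hL]
      linarith
  have hδT : δ ∈ Set.Icc (0:ℝ) (1 - 1/(P:ℝ)) := ⟨h0, le_trans hδε hε⟩
  have hεT : ε ∈ Set.Icc (0:ℝ) (1 - 1/(P:ℝ)) := ⟨le_trans h0 hδε, hε⟩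
  exact hmono hδT hεT hδε


section LinAlg
variable {n : Type*} [Fintype n] [DecidableEq n]

lemma inner_eq_dot (x y : EuclideanSpace ℝ n) : ⟪x, y⟫ = dotProduct (⇑x) (⇑y) := by
  simp [PiLp.inner_apply, dotProduct, mul_comm]

lemma sum_apply_euc {ι : Type*} (K : Finset ι) (f : ι → EuclideanSpace ℝ n) (i : n) :
    (∑ j ∈ K, f j) i = ∑ j ∈ K, f j i := by
  classical
  induction K using Finset.induction with
  | empty => rfl
  | insert _ _ h ih => rw [Finset.sum_insert h, Finset.sum_insert h, ← ih]; rfl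

lemma span_inner_zero {v : n → EuclideanSpace ℝ n} (hv : Orthonormal ℝ v) (K : Finset n)
    {x : EuclideanSpace ℝ n} (hx : x ∈ Submodule.span ℝ (v '' K)) {i : n} (hi : i ∉ K) :
    ⟪v i, x⟫ = 0 := by
  induction hx using Submodule.span_induction with
  | mem y hy =>
    obtain ⟨j, hj, rfl⟩ := hy
    exact hv.2 (fun h => hi (h ▸ hj))
  | zero => exact inner_zero_right _
  | add y z _ _ hy hz => rw [inner_add_right, hy, hz, add_zero]
  | smul c y _ hy => rw [inner_smul_right, hy, mul_zero]

lemma span_repr {v : OrthonormalBasis n ℝ (EuclideanSpace ℝ n)} (K : Finset n)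
    {x : EuclideanSpace ℝ n} (hx : x ∈ Submodule.span ℝ (⇑v '' K)) :
    ∑ i ∈ K, ⟪v i, x⟫ • v i = x := by
  refine Eq.trans ?_ (v.sum_repr' x)
  exact Finset.sum_subset (Finset.subset_univ K)
    (fun i _ hi => by rw [span_inner_zero v.orthonormal K hx hi, zero_smul])

lemma quad_eval {A : Matrix n n ℝ} (hA : A.IsHermitian) (K : Finset n)
    {x : EuclideanSpace ℝ n}
    (hx : x ∈ Submodule.span ℝ (⇑hA.eigenvectorBasis '' K)) :
    dotProduct (⇑x) (A *ᵥ ⇑x)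
      = ∑ i ∈ K, hA.eigenvalues i * (⟪hA.eigenvectorBasis i, x⟫)^2 ∧
    ⟪x, x⟫ = ∑ i ∈ K, (⟪hA.eigenvectorBasis i, x⟫)^2 := by
  set v := hA.eigenvectorBasis with hv
  set c : n → ℝ := fun i => ⟪v i, x⟫ with hc
  have hrepr : ∑ i ∈ K, c i • v i = x := span_repr K hx
  set z : EuclideanSpace ℝ n := ∑ i ∈ K, (c i * hA.eigenvalues i) • v i with hz
  have hxx : ⟪x, x⟫ = ∑ i ∈ K, c i * c i := by
    rw [← hrepr]
    rw [v.orthonormal.inner_sum c c K]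
    simp
  have hxz : ⟪x, z⟫ = ∑ i ∈ K, c i * (c i * hA.eigenvalues i) := by
    conv_lhs => rw [← hrepr, hz]
    rw [v.orthonormal.inner_sum c (fun i => c i * hA.eigenvalues i) K]
    simp
  have hAx : (A *ᵥ ⇑x) = ⇑z := by
    funext j
    have hxfun : (⇑x : n → ℝ) = ∑ i ∈ K, c i • (⇑(v i) : n → ℝ) := by
      conv_lhs => rw [← hrepr]
      funext l
      show (∑ i ∈ K, c i • v i) l = (∑ i ∈ K, c i • (⇑(v i) : n → ℝ)) l
      rw [sum_apply_euc, Finset.sum_apply]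
      rfl
    rw [hxfun]
    have hlin : A *ᵥ (∑ i ∈ K, c i • (⇑(v i) : n → ℝ)) = ∑ i ∈ K, c i • (A *ᵥ ⇑(v i)) := by
      rw [← Matrix.mulVecLin_apply, map_sum]
      simp only [_root_.map_smul, Matrix.mulVecLin_apply, Matrix.mulVec_smul]
    rw [hlin]
    have heig : ∀ i, A *ᵥ ⇑(v i) = hA.eigenvalues i • ⇑(v i) := hA.mulVec_eigenvectorBasis
    have hzj : (⇑z : n → ℝ) j = ∑ i ∈ K, (c i * hA.eigenvalues i) * (v i j) := by
      show z j = _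
      rw [hz, sum_apply_euc]
      rfl
    rw [Finset.sum_apply, hzj]
    apply Finset.sum_congr rfl
    intro i _
    rw [heig i]
    show c i * (hA.eigenvalues i * v i j) = _
    ring
  constructor
  · rw [hAx, ← inner_eq_dot, hxz]
    apply Finset.sum_congr rfl
    intro i _
    ring
  · rw [hxx]
    apply Finset.sum_congr rfl
    intro i _
    ring

end LinAlg

section Count
variable {n : Type*} [Fintype n] [DecidableEq n]

lemma span_finset_finrank (v : OrthonormalBasis n ℝ (EuclideanSpace ℝ n)) (K : Finset n) :
    Module.finrank ℝ (Submodule.span ℝ (⇑v '' ↑K)) = K.card := by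
  rw [Set.image_eq_range]
  rw [finrank_span_eq_card]
  · simp
  · exact v.orthonormal.linearIndependent.comp Subtype.val Subtype.val_injective

lemma count_le {A B : Matrix n n ℝ} (hA : A.IsHermitian) (hB : B.IsHermitian) (c : ℝ)
    (H : ∀ x : EuclideanSpace ℝ n,
      x ∈ Submodule.span ℝ
        (⇑hB.eigenvectorBasis '' ↑(Finset.univ.filter fun i => c < hB.eigenvalues i)) →
      dotProduct (⇑x) (A *ᵥ ⇑x) = dotProduct (⇑x) (B *ᵥ ⇑x)) :
    (Finset.univ.filter fun i => c < hB.eigenvalues i).card ≤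
    (Finset.univ.filter fun i => c < hA.eigenvalues i).card := by
  by_contra hcon
  push_neg at hcon
  set I := Finset.univ.filter fun i => c < hB.eigenvalues i with hI
  set J := Finset.univ.filter fun i => ¬ c < hA.eigenvalues i with hJ
  set S := Submodule.span ℝ (⇑hB.eigenvectorBasis '' ↑I) with hS
  set T := Submodule.span ℝ (⇑hA.eigenvectorBasis '' ↑J) with hT
  have hcardJ : J.card = Fintype.card n - (Finset.univ.filter fun i => c < hA.eigenvalues i).card := by
    rw [hJ]
    rw [Finset.filter_not, Finset.card_sdiff_of_subset (Finset.filter_subset _ _), Finset.card_univ]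
  have hdimS : Module.finrank ℝ S = I.card := span_finset_finrank _ I
  have hdimT : Module.finrank ℝ T = J.card := span_finset_finrank _ J
  have hsum : Fintype.card n < Module.finrank ℝ S + Module.finrank ℝ T := by
    rw [hdimS, hdimT, hcardJ]
    have h1 : (Finset.univ.filter fun i => c < hA.eigenvalues i).card ≤ Fintype.card n := by
      rw [← Finset.card_univ]; exact Finset.card_le_card (Finset.filter_subset _ _)
    omega
  have hinf : 0 < Module.finrank ℝ ↥(S ⊓ T) := by
    have heq := Submodule.finrank_sup_add_finrank_inf_eq S T
    have hle : Module.finrank ℝ ↥(S ⊔ T) ≤ Fintype.card n := by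
      rw [← finrank_euclideanSpace (𝕜 := ℝ) (ι := n)]
      exact Submodule.finrank_le _
    omega
  obtain ⟨x, hxmem, hxne⟩ : ∃ x, x ∈ S ⊓ T ∧ x ≠ 0 := by
    rw [Module.finrank_pos_iff] at hinf
    obtain ⟨⟨x, hx⟩, hne⟩ := exists_ne (0 : ↥(S ⊓ T))
    refine ⟨x, hx, fun h => hne (Subtype.ext h)⟩
  have hxS : x ∈ S := hxmem.1
  have hxT : x ∈ T := hxmem.2
  -- quadratic forms
  obtain ⟨hQB, hnormS⟩ := quad_eval hB I hxS
  obtain ⟨hQA, hnormT⟩ := quad_eval hA J hxT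
  -- norm positive
  have hnormpos : (0:ℝ) < ⟪x, x⟫ := by
    rcases lt_or_eq_of_le (real_inner_self_nonneg (x := x)) with h | h
    · exact h
    · exact absurd (inner_self_eq_zero.mp h.symm) hxne
  -- B-form > c * norm
  have hBgt : c * ⟪x, x⟫ < dotProduct (⇑x) (B *ᵥ ⇑x) := by
    rw [hQB, hnormS, Finset.mul_sum]
    apply Finset.sum_lt_sum
    · intro i hi
      rw [hI, Finset.mem_filter] at hi
      nlinarith [sq_nonneg (⟪hB.eigenvectorBasis i, x⟫), hi.2]
    · -- exists strict
      by_contra hall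
      push_neg at hall
      apply hxne
      have hzero : ∀ i ∈ I, (⟪hB.eigenvectorBasis i, x⟫ : ℝ) = 0 := by
        intro i hi
        have h2 := hall i hi
        rw [hI, Finset.mem_filter] at hi
        by_contra hne
        have hsq : 0 < (⟪hB.eigenvectorBasis i, x⟫ : ℝ)^2 := by positivity
        nlinarith [hi.2]
      have : (⟪x, x⟫ : ℝ) = 0 := by
        rw [hnormS]
        exact Finset.sum_eq_zero (fun i hi => by rw [hzero i hi]; ring)
      exact inner_self_eq_zero.mp this
  -- A-form ≤ c * norm
  have hAle : dotProduct (⇑x) (A *ᵥ ⇑x) ≤ c * ⟪x, x⟫ := by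
    rw [hQA, hnormT, Finset.mul_sum]
    apply Finset.sum_le_sum
    intro i hi
    rw [hJ, Finset.mem_filter] at hi
    have := hi.2
    push_neg at this
    nlinarith [sq_nonneg (⟪hA.eigenvectorBasis i, x⟫ : ℝ)]
  have := H x hxS
  linarith

end Count

section Sorted

lemma card_filter_comp {α β : Type*} [Fintype α] [Fintype β] [DecidableEq α] [DecidableEq β]
    (e : α ≃ β) (f : β → ℝ) (c : ℝ) :
    (Finset.univ.filter fun i => c < f (e i)).card = (Finset.univ.filter fun j => c < f j).card := by
  apply Finset.card_equiv e
  intro i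
  simp

lemma sorted_dominate {P : ℕ} (lam mu : Fin P → ℝ) (hm1 : Monotone lam) (hm2 : Monotone mu)
    (hlam0 : ∀ i, 0 ≤ lam i)
    (hcount : ∀ c, 0 ≤ c →
      (Finset.univ.filter fun i => c < mu i).card ≤ (Finset.univ.filter fun i => c < lam i).card) :
    ∀ k, mu k ≤ lam k := by
  intro k
  by_contra h
  push_neg at h
  have h1 : (Finset.univ.filter fun i => k ≤ i) ⊆ Finset.univ.filter fun i => lam k < mu i := by
    intro i hi
    simp only [Finset.mem_filter, Finset.mem_univ, true_and] at hi ⊢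
    exact lt_of_lt_of_le h (hm2 hi)
  have h2 : (Finset.univ.filter fun i => lam k < lam i) ⊆ Finset.univ.filter fun i => k < i := by
    intro i hi
    simp only [Finset.mem_filter, Finset.mem_univ, true_and] at hi ⊢
    by_contra hik
    push_neg at hik
    exact absurd (hm1 hik) (not_le.mpr hi)
  have h3 : (Finset.univ.filter fun i => k < i) ⊂ Finset.univ.filter fun i => k ≤ i := by
    rw [Finset.ssubset_iff_of_subset]
    · exact ⟨k, by simp⟩
    · intro i hi
      simp only [Finset.mem_filter, Finset.mem_univ, true_and] at hi ⊢
      exact le_of_lt hi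
  have c1 := Finset.card_le_card h1
  have c2 := Finset.card_le_card h2
  have c3 := Finset.card_lt_card h3
  have := hcount (lam k) (hlam0 k)
  omega

end Sorted

section TraceEig
variable {n : Type*} [Fintype n] [DecidableEq n]

lemma sum_eigs {A : Matrix n n ℝ} (hA : A.IsHermitian) :
    ∑ i, hA.eigenvalues i = A.trace := by
  rw [hA.trace_eq_sum_eigenvalues]
  simp

end TraceEig
lemma main_abstract {n : Type*} [Fintype n] [DecidableEq n] {A B : Matrix n n ℝ}
    (hAH : A.IsHermitian) (hBH : B.IsHermitian)
    (hA0 : ∀ i, 0 ≤ hAH.eigenvalues i) (hB0 : ∀ i, 0 ≤ hBH.eigenvalues i)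
    (H : ∀ c : ℝ, 0 ≤ c → ∀ x : EuclideanSpace ℝ n,
      x ∈ Submodule.span ℝ
        (⇑hBH.eigenvectorBasis '' ↑(Finset.univ.filter fun i => c < hBH.eigenvalues i)) →
      dotProduct (⇑x) (A *ᵥ ⇑x) = dotProduct (⇑x) (B *ᵥ ⇑x))
    (htr : B.trace ≤ A.trace) (htpos : 0 < B.trace)
    {ε : ℝ} (hεlow : (A.trace - B.trace) / B.trace ≤ ε)
    (hεhigh : ε ≤ 1 - 1 / (Fintype.card n : ℝ)) :
    |(∑ i, Real.negMulLog (hAH.eigenvalues i / A.trace)) -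
      (∑ i, Real.negMulLog (hBH.eigenvalues i / B.trace))| ≤
      ε * Real.log ((Fintype.card n : ℝ) - 1)
        + (Real.negMulLog ε + Real.negMulLog (1 - ε)) := by
  classical
  set P := Fintype.card n with hP
  set s := A.trace with hs
  set t := B.trace with ht
  have hspos : 0 < s := lt_of_lt_of_le htpos htr
  have hP1 : 1 ≤ P := by
    by_contra h
    push_neg at h
    have hemp : IsEmpty n := Fintype.card_eq_zero_iff.mp (by omega)
    have : t = 0 := by
      rw [ht, Matrix.trace]
      simp [Finset.univ_eq_empty]
    rw [this] at htpos
    exact lt_irrefl 0 htpos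
  set e : Fin P ≃ n := (Fintype.equivFin n).symm with he
  set lam' : Fin P → ℝ := fun k => hAH.eigenvalues (e k) with hlam'
  set mu' : Fin P → ℝ := fun k => hBH.eigenvalues (e k) with hmu'
  set sa : Fin P → ℝ := lam' ∘ Tuple.sort lam' with hsa
  set sb : Fin P → ℝ := mu' ∘ Tuple.sort mu' with hsb
  have hsa_mono : Monotone sa := Tuple.monotone_sort lam'
  have hsb_mono : Monotone sb := Tuple.monotone_sort mu'
  have hsa0 : ∀ k, 0 ≤ sa k := fun k => hA0 _
  have hsb0 : ∀ k, 0 ≤ sb k := fun k => hB0 _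
  have hsum_sa : ∑ k, sa k = s := by
    rw [hsa]
    rw [show ∑ k, (lam' ∘ Tuple.sort lam') k = ∑ k, lam' ((Tuple.sort lam') k) from rfl]
    rw [Equiv.sum_comp (Tuple.sort lam') lam']
    rw [hlam', Equiv.sum_comp e hAH.eigenvalues]
    exact sum_eigs hAH
  have hsum_sb : ∑ k, sb k = t := by
    rw [hsb]
    rw [show ∑ k, (mu' ∘ Tuple.sort mu') k = ∑ k, mu' ((Tuple.sort mu') k) from rfl]
    rw [Equiv.sum_comp (Tuple.sort mu') mu']
    rw [hmu', Equiv.sum_comp e hBH.eigenvalues]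
    exact sum_eigs hBH
  have hcount : ∀ c, 0 ≤ c →
      (Finset.univ.filter fun i => c < sb i).card ≤ (Finset.univ.filter fun i => c < sa i).card := by
    intro c hc
    have e1 : (Finset.univ.filter fun i => c < sb i).card
        = (Finset.univ.filter fun j => c < hBH.eigenvalues j).card := by
      rw [hsb]
      rw [show (Finset.univ.filter fun i => c < (mu' ∘ Tuple.sort mu') i)
          = (Finset.univ.filter fun i => c < mu' (Tuple.sort mu' i)) from rfl]
      rw [card_filter_comp (Tuple.sort mu') mu' c]
      rw [hmu']
      exact card_filter_comp e hBH.eigenvalues c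
    have e2 : (Finset.univ.filter fun i => c < sa i).card
        = (Finset.univ.filter fun j => c < hAH.eigenvalues j).card := by
      rw [hsa]
      rw [show (Finset.univ.filter fun i => c < (lam' ∘ Tuple.sort lam') i)
          = (Finset.univ.filter fun i => c < lam' (Tuple.sort lam' i)) from rfl]
      rw [card_filter_comp (Tuple.sort lam') lam' c]
      rw [hlam']
      exact card_filter_comp e hAH.eigenvalues c
    rw [e1, e2]
    exact count_le hAH hBH c (H c hc)
  have hdom : ∀ k, sb k ≤ sa k :=
    sorted_dominate sa sb hsa_mono hsb_mono hsa0 hcount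
  -- normalized distributions
  set a : Fin P → ℝ := fun k => sa k / s with ha
  set b : Fin P → ℝ := fun k => sb k / t with hb
  have ha0 : ∀ k, 0 ≤ a k := fun k => div_nonneg (hsa0 k) (le_of_lt hspos)
  have hb0 : ∀ k, 0 ≤ b k := fun k => div_nonneg (hsb0 k) (le_of_lt htpos)
  have hsum_a : ∑ k, a k = 1 := by
    rw [ha, ← Finset.sum_div, hsum_sa, div_self (ne_of_gt hspos)]
  have hsum_b : ∑ k, b k = 1 := by
    rw [hb, ← Finset.sum_div, hsum_sb, div_self (ne_of_gt htpos)]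
  set δ : ℝ := (∑ k, |a k - b k|) / 2 with hδ
  have hδ0 : 0 ≤ δ := by
    rw [hδ]; positivity
  have hδbound : δ ≤ (s - t) / t := by
    have hterm : ∀ k, |a k - b k| ≤ (sa k - sb k)/s + sb k * (1/t - 1/s) := by
      intro k
      have h1 : a k - b k = (sa k - sb k)/s - sb k * (1/t - 1/s) := by
        rw [ha, hb]
        field_simp
        ring
      have h2 : 0 ≤ (sa k - sb k)/s := div_nonneg (by linarith [hdom k]) (le_of_lt hspos)
      have h3 : 0 ≤ sb k * (1/t - 1/s) := by
        apply mul_nonneg (hsb0 k)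
        have := one_div_le_one_div_of_le htpos htr
        linarith
      rw [h1]
      rw [abs_sub_le_iff]
      constructor <;> linarith
    have hsum : ∑ k, |a k - b k| ≤ (s - t)/s + t * (1/t - 1/s) := by
      calc ∑ k, |a k - b k| ≤ ∑ k, ((sa k - sb k)/s + sb k * (1/t - 1/s)) :=
            Finset.sum_le_sum (fun k _ => hterm k)
        _ = (s - t)/s + t * (1/t - 1/s) := by
            rw [Finset.sum_add_distrib, ← Finset.sum_div, Finset.sum_sub_distrib,
              hsum_sa, hsum_sb, ← Finset.sum_mul, hsum_sb]
    have heq : (s - t)/s + t * (1/t - 1/s) = 2 * ((s - t)/s) := by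
      field_simp
      ring
    have hles : (s - t)/s ≤ (s - t)/t :=
      div_le_div_of_nonneg_left (by linarith) htpos htr |>.trans_eq rfl
    rw [hδ]
    rw [heq] at hsum
    linarith
  have hεt : (s - t)/t ≤ ε := hεlow
  have hδε : δ ≤ ε := le_trans hδbound hεt
  have hδ1 : δ < 1 := by
    have hPpos : (0:ℝ) < (P:ℝ) := by exact_mod_cast hP1
    have : 0 < 1/(P:ℝ) := by positivity
    linarith [le_trans hδε hεhigh]
  -- Fannes both directions
  have hf1 := fannes_aux a b ha0 hb0 hsum_a hsum_b hδ hδ1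
  have hδ' : δ = (∑ k, |b k - a k|) / 2 := by
    rw [hδ]
    congr 1
    exact Finset.sum_congr rfl (fun k _ => abs_sub_comm _ _)
  have hf2 := fannes_aux b a hb0 ha0 hsum_b hsum_a hδ' hδ1
  rw [Fintype.card_fin] at hf1 hf2
  have habs : |(∑ k, Real.negMulLog (a k)) - (∑ k, Real.negMulLog (b k))| ≤
      δ * Real.log ((P:ℝ) - 1) + (Real.negMulLog δ + Real.negMulLog (1 - δ)) := by
    rw [abs_sub_le_iff]
    exact ⟨hf1, hf2⟩
  have hmono := fannes_mono hP1 hδ0 hδε hεhigh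
  -- transfer sums back
  have htrans_a : ∑ i, Real.negMulLog (hAH.eigenvalues i / s) = ∑ k, Real.negMulLog (a k) := by
    rw [ha]
    have h1 : ∑ k, Real.negMulLog (sa k / s)
        = ∑ k, Real.negMulLog (lam' k / s) := by
      rw [hsa]
      exact Equiv.sum_comp (Tuple.sort lam') (fun k => Real.negMulLog (lam' k / s))
    rw [h1, hlam']
    exact (Equiv.sum_comp e (fun i => Real.negMulLog (hAH.eigenvalues i / s))).symm
  have htrans_b : ∑ i, Real.negMulLog (hBH.eigenvalues i / t) = ∑ k, Real.negMulLog (b k) := by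
    rw [hb]
    have h1 : ∑ k, Real.negMulLog (sb k / t)
        = ∑ k, Real.negMulLog (mu' k / t) := by
      rw [hsb]
      exact Equiv.sum_comp (Tuple.sort mu') (fun k => Real.negMulLog (mu' k / t))
    rw [h1, hmu']
    exact (Equiv.sum_comp e (fun i => Real.negMulLog (hBH.eigenvalues i / t))).symm
  rw [htrans_a, htrans_b]
  exact le_trans habs hmono

lemma frobSq_eq {m k : Type*} [Fintype m] [Fintype k] (A : Matrix m k ℝ) :
    frobSq A = ∑ i, ∑ j, (A i j)^2 := by
  rw [frobSq, Matrix.trace]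
  simp only [Matrix.diag_apply, Matrix.mul_apply, Matrix.transpose_apply, sq]
  exact Finset.sum_comm

lemma frobSq_nonneg {m k : Type*} [Fintype m] [Fintype k] (A : Matrix m k ℝ) :
    0 ≤ frobSq A := by
  rw [frobSq_eq]
  apply Finset.sum_nonneg
  intro i _
  apply Finset.sum_nonneg
  intro j _
  positivity

/-- **Ignoring the gating contribution.** Let `G` be a symmetric positive semidefinite
`P × P` matrix (`P = P_g + P_e`) partitioned as `G = [[G_gg, G_ge], [G_geᵀ, G_ee]]`, and let
`G_exp = [[0, 0], [0, G_ee]]` be the expert-only approximation.  Then `Δ = G − G_exp`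
satisfies `‖Δ‖_F² = ‖G_gg‖_F² + 2 ‖G_ge‖_F²`, and with `τ = min{Tr(G), Tr(G_exp)} > 0` and
`ε = √P ‖Δ‖_F / τ`, if `ε ≤ 1 − 1/P` then
`|log r_e(G) − log r_e(G_exp)| ≤ ε log(P−1) + h(ε)`, where `h` is the binary entropy. -/
theorem stmt13 {Pg Pe : ℕ}
    (Ggg : Matrix (Fin Pg) (Fin Pg) ℝ) (Gge : Matrix (Fin Pg) (Fin Pe) ℝ)
    (Gee : Matrix (Fin Pe) (Fin Pe) ℝ)
    (G Gexp : Matrix (Fin Pg ⊕ Fin Pe) (Fin Pg ⊕ Fin Pe) ℝ)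
    (hG : G = Matrix.fromBlocks Ggg Gge Ggeᵀ Gee)
    (hGexp : Gexp = Matrix.fromBlocks 0 0 0 Gee)
    (hpsd : G.PosSemidef)
    (τ : ℝ) (hτ : τ = min G.trace Gexp.trace) (hτpos : 0 < τ)
    (ε : ℝ) (hε : ε = Real.sqrt ((Pg + Pe : ℕ) : ℝ) * frobNorm (G - Gexp) / τ) :
    frobSq (G - Gexp) = frobSq Ggg + 2 * frobSq Gge ∧
    (ε ≤ 1 - 1 / ((Pg + Pe : ℕ) : ℝ) →
      |Real.log (effRank G) - Real.log (effRank Gexp)| ≤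
        ε * Real.log (((Pg + Pe : ℕ) : ℝ) - 1) + binEnt ε) := by
  have hΔ : G - Gexp = Matrix.fromBlocks Ggg Gge Ggeᵀ 0 := by
    rw [hG, hGexp]
    ext i j
    rcases i with i | i <;> rcases j with j | j <;>
      simp [Matrix.sub_apply, Matrix.fromBlocks]
  -- first conjunct
  have hfrob : frobSq (G - Gexp) = frobSq Ggg + 2 * frobSq Gge := by
    rw [hΔ, frobSq_eq, frobSq_eq, frobSq_eq]
    rw [Fintype.sum_sum_type]
    have h1 : ∀ i : Fin Pg, ∑ j : Fin Pg ⊕ Fin Pe, ((Matrix.fromBlocks Ggg Gge Ggeᵀ (0 : Matrix (Fin Pe) (Fin Pe) ℝ)) (Sum.inl i) j)^2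
        = ∑ j, (Ggg i j)^2 + ∑ j, (Gge i j)^2 := by
      intro i
      rw [Fintype.sum_sum_type]
      simp [Matrix.fromBlocks]
    have h2 : ∀ i : Fin Pe, ∑ j : Fin Pg ⊕ Fin Pe, ((Matrix.fromBlocks Ggg Gge Ggeᵀ (0 : Matrix (Fin Pe) (Fin Pe) ℝ)) (Sum.inr i) j)^2
        = ∑ j, (Gge j i)^2 := by
      intro i
      rw [Fintype.sum_sum_type]
      simp [Matrix.fromBlocks, Matrix.transpose_apply]
    rw [Finset.sum_congr rfl (fun i _ => h1 i), Finset.sum_congr rfl (fun i _ => h2 i)]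
    rw [Finset.sum_add_distrib]
    rw [Finset.sum_comm (f := fun i j => (Gge j i)^2)]
    ring
  refine ⟨hfrob, ?_⟩
  intro hεhi
  -- entrywise symmetry of G
  have hGsym : ∀ i j, G j i = G i j := by
    intro i j
    have h := congrFun (congrFun hpsd.1 i) j
    simpa [Matrix.conjTranspose_apply] using h
  have hGee_symm : ∀ a b, Gee b a = Gee a b := by
    intro a b
    have h := hGsym (Sum.inr a) (Sum.inr b)
    rw [hG] at h
    simpa [Matrix.fromBlocks] using h
  have hEH : Gexp.IsHermitian := by
    rw [Matrix.IsHermitian]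
    ext i j
    rcases i with i | i <;> rcases j with j | j <;>
      simp [Matrix.conjTranspose_apply, hGexp, Matrix.fromBlocks, hGee_symm]
  -- Gexp is PSD
  have hEpsd : Gexp.PosSemidef := by
    refine posSemidef_iff_dotProduct_mulVec.mpr ⟨hEH, ?_⟩
    intro x
    set y : (Fin Pg ⊕ Fin Pe) → ℝ := Sum.elim (fun _ => 0) (fun b => x (Sum.inr b)) with hy
    have hgoal : dotProduct (star x) (Gexp *ᵥ x)
        = dotProduct (star y) (G *ᵥ y) := by
      simp [hGexp, hG, dotProduct, Matrix.mulVec, Fintype.sum_sum_type,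
        Matrix.fromBlocks, hy, star]
    rw [hgoal]
    exact hpsd.dotProduct_mulVec_nonneg y
  have hGH : G.IsHermitian := hpsd.1
  have hA0 : ∀ i, 0 ≤ hGH.eigenvalues i := hpsd.eigenvalues_nonneg
  have hB0 : ∀ i, 0 ≤ hEH.eigenvalues i := hEpsd.eigenvalues_nonneg
  -- traces
  have htrG : G.trace = (∑ i, Ggg i i) + Gee.trace := by
    simp [hG, Matrix.trace, Matrix.diag, Fintype.sum_sum_type, Matrix.fromBlocks]
  have htrE : Gexp.trace = Gee.trace := by
    simp [hGexp, Matrix.trace, Matrix.diag, Fintype.sum_sum_type, Matrix.fromBlocks]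
  have hdiag : ∀ i : Fin Pg, 0 ≤ Ggg i i := by
    intro i
    have h := hpsd.dotProduct_mulVec_nonneg (Pi.single (Sum.inl i) 1)
    have heq : dotProduct (star (Pi.single (Sum.inl i) (1:ℝ)))
        (G *ᵥ Pi.single (Sum.inl i) 1) = G (Sum.inl i) (Sum.inl i) := by
      simp [dotProduct, Matrix.mulVec, Pi.single_apply, star,
        Finset.sum_ite_eq, Finset.sum_ite_eq']
    rw [heq, hG] at h
    simpa [Matrix.fromBlocks] using h
  have hsumGgg : 0 ≤ ∑ i, Ggg i i := Finset.sum_nonneg (fun i _ => hdiag i)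
  have htle : Gexp.trace ≤ G.trace := by
    rw [htrG, htrE]; linarith
  have hτt : τ = Gexp.trace := by rw [hτ, min_eq_right htle]
  have htpos : 0 < Gexp.trace := by rw [← hτt]; exact hτpos
  have hspos : 0 < G.trace := lt_of_lt_of_le htpos htle
  -- the quadratic-form hypothesis
  have hquad : ∀ c : ℝ, 0 ≤ c → ∀ x : EuclideanSpace ℝ (Fin Pg ⊕ Fin Pe),
      x ∈ Submodule.span ℝ
        (⇑hEH.eigenvectorBasis '' ↑(Finset.univ.filter fun i => c < hEH.eigenvalues i)) →
      dotProduct (⇑x) (G *ᵥ ⇑x) = dotProduct (⇑x) (Gexp *ᵥ ⇑x) := by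
    intro c hc x hx
    have hx0 : ∀ g : Fin Pg, x (Sum.inl g) = 0 := by
      induction hx using Submodule.span_induction with
      | mem y hy =>
        obtain ⟨i, hi, rfl⟩ := hy
        rw [Finset.mem_coe, Finset.mem_filter] at hi
        intro g
        have heig := hEH.mulVec_eigenvectorBasis i
        have happ := congrFun heig (Sum.inl g)
        have hrow : (Gexp *ᵥ ⇑(hEH.eigenvectorBasis i)) (Sum.inl g) = 0 := by
          simp [hGexp, Matrix.mulVec, dotProduct, Fintype.sum_sum_type,
            Matrix.fromBlocks]
        rw [hrow] at happ
        have hne : hEH.eigenvalues i ≠ 0 := ne_of_gt (lt_of_le_of_lt hc hi.2)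
        have hmz : hEH.eigenvalues i * (hEH.eigenvectorBasis i) (Sum.inl g) = 0 := happ.symm
        rcases mul_eq_zero.mp hmz with h | h
        · exact absurd h hne
        · exact h
      | zero => intro g; rfl
      | add y z _ _ hy hz =>
        intro g
        have : (y + z) (Sum.inl g) = y (Sum.inl g) + z (Sum.inl g) := rfl
        rw [this, hy g, hz g, add_zero]
      | smul c' y _ hy =>
        intro g
        have : (c' • y) (Sum.inl g) = c' * y (Sum.inl g) := rfl
        rw [this, hy g, mul_zero]
    simp only [hG, hGexp, dotProduct, Matrix.mulVec, Fintype.sum_sum_type,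
      Matrix.fromBlocks, hx0]
    simp [dotProduct, hx0]
  -- bound (s - t)/t ≤ ε
  have hcard : Fintype.card (Fin Pg ⊕ Fin Pe) = Pg + Pe := by simp
  have hεlow : (G.trace - Gexp.trace) / Gexp.trace ≤ ε := by
    have hst : G.trace - Gexp.trace = ∑ i, Ggg i i := by
      rw [htrG, htrE]; ring
    have hcs : (∑ i, Ggg i i)^2 ≤ ((Pg + Pe : ℕ) : ℝ) * frobSq (G - Gexp) := by
      have h1 : (∑ i, Ggg i i)^2 ≤ ((Finset.univ : Finset (Fin Pg)).card : ℝ) * ∑ i, (Ggg i i)^2 := by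
        exact_mod_cast sq_sum_le_card_mul_sum_sq
          (s := (Finset.univ : Finset (Fin Pg))) (f := fun i => Ggg i i)
      have h2 : ∑ i, (Ggg i i)^2 ≤ frobSq Ggg := by
        rw [frobSq_eq]
        apply Finset.sum_le_sum
        intro i _
        exact Finset.single_le_sum (f := fun j => (Ggg i j)^2)
          (fun j _ => sq_nonneg _) (Finset.mem_univ i)
      have h3 : frobSq Ggg ≤ frobSq (G - Gexp) := by
        rw [hfrob]
        have := frobSq_nonneg Gge
        linarith
      have h4 : ((Finset.univ : Finset (Fin Pg)).card : ℝ) ≤ ((Pg + Pe : ℕ) : ℝ) := by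
        have : (Finset.univ : Finset (Fin Pg)).card = Pg := by simp
        rw [this]
        exact_mod_cast Nat.le_add_right Pg Pe
      have h5 : (0:ℝ) ≤ ∑ i, (Ggg i i)^2 :=
        Finset.sum_nonneg (fun i _ => sq_nonneg _)
      calc (∑ i, Ggg i i)^2 ≤ ((Finset.univ : Finset (Fin Pg)).card : ℝ) * ∑ i, (Ggg i i)^2 := h1
        _ ≤ ((Pg + Pe : ℕ) : ℝ) * ∑ i, (Ggg i i)^2 := mul_le_mul_of_nonneg_right h4 h5
        _ ≤ ((Pg + Pe : ℕ) : ℝ) * frobSq (G - Gexp) := by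
            apply mul_le_mul_of_nonneg_left (le_trans h2 h3)
            positivity
    have hkey : ∑ i, Ggg i i ≤ Real.sqrt ((Pg + Pe : ℕ) : ℝ) * frobNorm (G - Gexp) := by
      have h6 : Real.sqrt ((∑ i, Ggg i i)^2) ≤
          Real.sqrt (((Pg + Pe : ℕ) : ℝ) * frobSq (G - Gexp)) :=
        Real.sqrt_le_sqrt hcs
      rw [Real.sqrt_sq hsumGgg] at h6
      rw [Real.sqrt_mul (by positivity) _] at h6
      rw [frobNorm]
      exact h6
    rw [hε, hτt, hst]
    gcongr
  -- final assembly
  have hεhi' : ε ≤ 1 - 1 / (Fintype.card (Fin Pg ⊕ Fin Pe) : ℝ) := by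
    rw [hcard]; exact hεhi
  have hmain := main_abstract hGH hEH hA0 hB0 hquad htle htpos hεlow hεhi'
  rw [hcard] at hmain
  have hSG : Real.log (effRank G) = ∑ i, Real.negMulLog (hGH.eigenvalues i / G.trace) := by
    rw [effRank, Real.log_exp, specEntropy, dif_pos hGH, sum_eigs hGH]
    simp [Real.negMulLog_eq_neg]
  have hSE : Real.log (effRank Gexp) = ∑ i, Real.negMulLog (hEH.eigenvalues i / Gexp.trace) := by
    rw [effRank, Real.log_exp, specEntropy, dif_pos hEH, sum_eigs hEH]
    simp [Real.negMulLog_eq_neg]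
  have hbin : binEnt ε = Real.negMulLog ε + Real.negMulLog (1 - ε) := by
    simp [binEnt, Real.negMulLog]
    ring
  rw [hSG, hSE, hbin]
  exact hmain
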